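/- arXiv:2505.01392 — 3 statements merged into one kernel-verified Lean document; each statement's English description precedes it below -/
import Mathlib

section
/- Let M ⊂ ℝ³ be a bounded smooth domain, s > 5/2, χ ∈ H^{s-1}(M), f ∈ H^{s-1/2}(∂M) with harmonic extension u_f ∈ H^s(M), and δ > 0. Define X = {u ∈ H^s(M) : ‖u - u_f‖_{H^s} ≤ δ} and T_h(u) = u_f - h Δ_D^{-1}(div(χ |∇u|² ∇u)), where Δ_D^{-1} is the inverse Dirichlet Laplacian. Then there exists h₀ > 0 such that for all 0 < h ≤ h₀, T_h maps X into X and is a contraction with Lipschitz constant at most 1/2 with respect to the H^s norm. -/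
/-- Contraction lemma for the strong-field construction. `Hs` plays the role of `H^s(M)`,
`B` is the trilinear map `(φ₁,φ₂,φ₃) ↦ Δ_D⁻¹ div(χ ⟨∇φ₁,∇φ₂⟩ ∇φ₃)`, which by the algebra
property of `H^{s-1}(M)` (for `s > 5/2`) is bounded by `C₁‖χ‖‖φ₁‖‖φ₂‖‖φ₃‖`; here that
constant is folded into `C₁`. Then `T_h(u) = u_f - h B(u,u,u)` maps
`X = {u : ‖u - u_f‖ ≤ δ}` into itself and is a `1/2`-contraction for all `0 < h ≤ h₀`. -/
theorem stmt4 {Hs : Type*} [NormedAddCommGroup Hs] [NormedSpace ℝ Hs] [CompleteSpace Hs]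
    (B : Hs →ₗ[ℝ] Hs →ₗ[ℝ] Hs →ₗ[ℝ] Hs) (C₁ : ℝ)
    (hB : ∀ φ₁ φ₂ φ₃ : Hs, ‖B φ₁ φ₂ φ₃‖ ≤ C₁ * ‖φ₁‖ * ‖φ₂‖ * ‖φ₃‖)
    (u_f : Hs) (δ : ℝ) (hδ : 0 < δ)
    (X : Set Hs) (hX : X = {u : Hs | ‖u - u_f‖ ≤ δ})
    (T : ℝ → Hs → Hs) (hT : ∀ h u, T h u = u_f - h • B u u u) :
    ∃ h₀ > 0, ∀ h : ℝ, 0 < h → h ≤ h₀ →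
      (∀ u ∈ X, T h u ∈ X) ∧
      (∀ u ∈ X, ∀ u' ∈ X, ‖T h u - T h u'‖ ≤ (1 / 2) * ‖u - u'‖) := by
  set C : ℝ := max C₁ 0 with hC
  have hC0 : 0 ≤ C := le_max_right _ _
  have hB' : ∀ φ₁ φ₂ φ₃ : Hs, ‖B φ₁ φ₂ φ₃‖ ≤ C * ‖φ₁‖ * ‖φ₂‖ * ‖φ₃‖ := by
    intro φ₁ φ₂ φ₃
    refine (hB φ₁ φ₂ φ₃).trans ?_
    gcongr
    exact le_max_left _ _
  set R : ℝ := ‖u_f‖ + δ with hR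
  have hR0 : 0 ≤ R := by positivity
  have hbound : ∀ u ∈ X, ‖u‖ ≤ R := by
    intro u hu
    rw [hX] at hu
    have h1 : ‖u‖ ≤ ‖u - u_f‖ + ‖u_f‖ := by
      simpa using norm_add_le (u - u_f) u_f
    simp only [Set.mem_setOf_eq] at hu
    rw [hR]; linarith
  refine ⟨min (δ / (C * R^3 + 1)) (1 / (2 * (3 * C * R^2 + 1))), ?_, ?_⟩
  · have h1 : (0:ℝ) < C * R^3 + 1 := by positivity
    have h2 : (0:ℝ) < 2 * (3 * C * R^2 + 1) := by positivity
    exact lt_min (by positivity) (by positivity)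
  intro h hh hle
  have hle1 : h ≤ δ / (C * R^3 + 1) := hle.trans (min_le_left _ _)
  have hle2 : h ≤ 1 / (2 * (3 * C * R^2 + 1)) := hle.trans (min_le_right _ _)
  have hd1 : (0:ℝ) < C * R^3 + 1 := by positivity
  have hd2 : (0:ℝ) < 2 * (3 * C * R^2 + 1) := by positivity
  rw [le_div_iff₀ hd1] at hle1
  rw [le_div_iff₀ hd2] at hle2
  constructor
  · intro u hu
    have hu' : ‖u‖ ≤ R := hbound u hu
    rw [hX]
    simp only [Set.mem_setOf_eq, hT]
    have heq : ‖u_f - h • B u u u - u_f‖ = ‖h • B u u u‖ := by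
      rw [show u_f - h • B u u u - u_f = -(h • B u u u) by abel, norm_neg]
    rw [heq, norm_smul, Real.norm_eq_abs, abs_of_pos hh]
    have hBb : ‖B u u u‖ ≤ C * R^3 := by
      refine (hB' u u u).trans ?_
      calc C * ‖u‖ * ‖u‖ * ‖u‖ ≤ C * R * R * R := by gcongr
        _ = C * R^3 := by ring
    have h2 : h * ‖B u u u‖ ≤ h * (C * R^3 + 1) := by
      apply mul_le_mul_of_nonneg_left _ hh.le
      linarith
    linarith
  · intro u hu v hv
    have hu' : ‖u‖ ≤ R := hbound u hu
    have hv' : ‖v‖ ≤ R := hbound v hv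
    have key : B u u u - B v v v
        = B (u - v) u u + B v (u - v) u + B v v (u - v) := by
      simp only [map_sub, LinearMap.sub_apply]
      abel
    have hnn : (0:ℝ) ≤ ‖u - v‖ := norm_nonneg _
    have e1 : ‖B (u - v) u u‖ ≤ C * R^2 * ‖u - v‖ := by
      refine (hB' _ _ _).trans ?_
      calc C * ‖u - v‖ * ‖u‖ * ‖u‖ ≤ C * ‖u - v‖ * R * R := by gcongr
        _ = C * R^2 * ‖u - v‖ := by ring
    have e2 : ‖B v (u - v) u‖ ≤ C * R^2 * ‖u - v‖ := by
      refine (hB' _ _ _).trans ?_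
      calc C * ‖v‖ * ‖u - v‖ * ‖u‖ ≤ C * R * ‖u - v‖ * R := by gcongr
        _ = C * R^2 * ‖u - v‖ := by ring
    have e3 : ‖B v v (u - v)‖ ≤ C * R^2 * ‖u - v‖ := by
      refine (hB' _ _ _).trans ?_
      calc C * ‖v‖ * ‖v‖ * ‖u - v‖ ≤ C * R * R * ‖u - v‖ := by gcongr
        _ = C * R^2 * ‖u - v‖ := by ring
    have hdiff : ‖B u u u - B v v v‖ ≤ 3 * C * R^2 * ‖u - v‖ := by
      rw [key]
      calc ‖B (u - v) u u + B v (u - v) u + B v v (u - v)‖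
          ≤ ‖B (u - v) u u‖ + ‖B v (u - v) u‖ + ‖B v v (u - v)‖ :=
            norm_add₃_le
        _ ≤ 3 * C * R^2 * ‖u - v‖ := by linarith
    have hTdiff : T h u - T h v = h • (B v v v - B u u u) := by
      rw [hT, hT, smul_sub]; abel
    rw [hTdiff, norm_smul, Real.norm_eq_abs, abs_of_pos hh, norm_sub_rev]
    have step1 : h * ‖B u u u - B v v v‖ ≤ h * (3 * C * R^2 * ‖u - v‖) :=
      mul_le_mul_of_nonneg_left hdiff hh.le
    have step2 := mul_le_mul_of_nonneg_right hle2 hnn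
    nlinarith [step1, step2]
end

section
/- Under the hypotheses of the preceding contraction lemma, for each 0 < h ≤ h₀ there exists a unique ψ(·,h) ∈ X = {u ∈ H^s(M) : ‖u - u_f‖_{H^s} ≤ δ} solving div(∇ψ + h χ |∇ψ|² ∇ψ) = 0 in M with ψ = f on ∂M; moreover ψ = u_f - h Δ_D^{-1}(div(χ |∇u_f|² ∇u_f)) + O_{H^s}(h²). -/
/-!
On the ball `‖u‖ ≤ R` the cubic term `u ↦ B u u u` is bounded by `K R³` and is
`3 K R²`-Lipschitz, so for small `h` the map `T_h u = u_f - h B(u,u,u)` sends the closed ball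
of radius `δ` about `u_f` into itself and is a `1/2`-contraction there; Banach's fixed point
theorem gives the unique solution `ψ`. Since `ψ - u_f = -h B(ψ,ψ,ψ) = O(h)`, applying the
Lipschitz bound once more gives `ψ - T_h u_f = T_h ψ - T_h u_f = O(h²)`.
-/

open Function Metric Set

theorem existsUnique_isFixedPt_of_lipschitzOnWith {α : Type*} [MetricSpace α] {f : α → α}
    {s : Set α} {K : NNReal} (hsc : IsComplete s) (hs : s.Nonempty) (hsf : MapsTo f s s)
    (hf : LipschitzOnWith K f s) (hK : K < 1) :
    ∃! x, x ∈ s ∧ IsFixedPt f x := by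
  have hc : ContractingWith K (hsf.restrict f s s) := ⟨hK, hf.mapsToRestrict hsf⟩
  obtain ⟨x, hxs⟩ := hs
  obtain ⟨y, hys, hfy, -⟩ := hc.exists_fixedPoint' hsc hsf hxs (edist_ne_top _ _)
  refine ⟨y, ⟨hys, hfy⟩, fun z ⟨hzs, hfz⟩ => ?_⟩
  exact congrArg Subtype.val
    (hc.fixedPoint_unique' (x := ⟨z, hzs⟩) (y := ⟨y, hys⟩) (Subtype.ext hfz) (Subtype.ext hfy))

section Trilinear

variable {E : Type*} [NormedAddCommGroup E] [NormedSpace ℝ E]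
  (B : E →ₗ[ℝ] E →ₗ[ℝ] E →ₗ[ℝ] E) {K R : ℝ}

theorem trilinear_diag_sub_diag (u v : E) :
    B u u u - B v v v = B (u - v) u u + B v (u - v) u + B v v (u - v) := by
  simp only [map_sub, LinearMap.sub_apply]
  abel

variable {B}

theorem norm_trilinear_diag_le (hK : ∀ a b c : E, ‖B a b c‖ ≤ K * ‖a‖ * ‖b‖ * ‖c‖)
    (hK0 : 0 ≤ K) {u : E} (hu : ‖u‖ ≤ R) : ‖B u u u‖ ≤ K * R ^ 3 :=
  have hR : 0 ≤ R := (norm_nonneg u).trans hu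
  calc ‖B u u u‖ ≤ K * ‖u‖ * ‖u‖ * ‖u‖ := hK u u u
    _ ≤ K * R * R * R := by gcongr
    _ = K * R ^ 3 := by ring

theorem norm_trilinear_diag_sub_diag_le (hK : ∀ a b c : E, ‖B a b c‖ ≤ K * ‖a‖ * ‖b‖ * ‖c‖)
    (hK0 : 0 ≤ K) {u v : E} (hu : ‖u‖ ≤ R) (hv : ‖v‖ ≤ R) :
    ‖B u u u - B v v v‖ ≤ 3 * K * R ^ 2 * ‖u - v‖ := by
  have hR : 0 ≤ R := (norm_nonneg u).trans hu
  have h₁ : ‖B (u - v) u u‖ ≤ K * ‖u - v‖ * R * R :=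
    (hK _ _ _).trans (by gcongr)
  have h₂ : ‖B v (u - v) u‖ ≤ K * R * ‖u - v‖ * R :=
    (hK _ _ _).trans (by gcongr)
  have h₃ : ‖B v v (u - v)‖ ≤ K * R * R * ‖u - v‖ :=
    (hK _ _ _).trans (by gcongr)
  calc ‖B u u u - B v v v‖
      ≤ ‖B (u - v) u u‖ + ‖B v (u - v) u‖ + ‖B v v (u - v)‖ := by
        rw [trilinear_diag_sub_diag]; exact norm_add₃_le
    _ ≤ 3 * K * R ^ 2 * ‖u - v‖ := by linarith

variable (B)

/-- The map `T_h` of the contraction lemma. -/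
def picardMap (u_f : E) (h : ℝ) (u : E) : E := u_f - h • B u u u

variable {B}

theorem norm_picardMap_sub_le (hK : ∀ a b c : E, ‖B a b c‖ ≤ K * ‖a‖ * ‖b‖ * ‖c‖)
    (hK0 : 0 ≤ K) (u_f : E) {h : ℝ} (hh : 0 ≤ h) {u : E} (hu : ‖u‖ ≤ R) :
    ‖picardMap B u_f h u - u_f‖ ≤ h * (K * R ^ 3) := by
  rw [picardMap, sub_sub_cancel_left, norm_neg, norm_smul, Real.norm_of_nonneg hh]
  exact mul_le_mul_of_nonneg_left (norm_trilinear_diag_le hK hK0 hu) hh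

theorem dist_picardMap_le (hK : ∀ a b c : E, ‖B a b c‖ ≤ K * ‖a‖ * ‖b‖ * ‖c‖)
    (hK0 : 0 ≤ K) (u_f : E) {h : ℝ} (hh : 0 ≤ h) {u v : E} (hu : ‖u‖ ≤ R) (hv : ‖v‖ ≤ R) :
    dist (picardMap B u_f h u) (picardMap B u_f h v) ≤ h * (3 * K * R ^ 2) * dist u v := by
  rw [dist_eq_norm, dist_eq_norm, picardMap, picardMap, sub_sub_sub_cancel_left, ← smul_sub,
    norm_smul, Real.norm_of_nonneg hh, mul_assoc, norm_sub_rev (B v v v)]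
  exact mul_le_mul_of_nonneg_left (norm_trilinear_diag_sub_diag_le hK hK0 hu hv) hh

theorem norm_fixedPt_sub_picardMap_le (hK : ∀ a b c : E, ‖B a b c‖ ≤ K * ‖a‖ * ‖b‖ * ‖c‖)
    (hK0 : 0 ≤ K) {u_f ψ : E} {h : ℝ} (hh : 0 ≤ h) (hψ : IsFixedPt (picardMap B u_f h) ψ)
    (hψR : ‖ψ‖ ≤ R) (hfR : ‖u_f‖ ≤ R) :
    ‖ψ - picardMap B u_f h u_f‖ ≤ 3 * K ^ 2 * R ^ 5 * h ^ 2 := by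
  have hL : 0 ≤ h * (3 * K * R ^ 2) := by positivity
  calc ‖ψ - picardMap B u_f h u_f‖
      = dist (picardMap B u_f h ψ) (picardMap B u_f h u_f) := by rw [hψ.eq, dist_eq_norm]
    _ ≤ h * (3 * K * R ^ 2) * dist ψ u_f := dist_picardMap_le hK hK0 u_f hh hψR hfR
    _ = h * (3 * K * R ^ 2) * ‖picardMap B u_f h ψ - u_f‖ := by rw [hψ.eq, dist_eq_norm]
    _ ≤ h * (3 * K * R ^ 2) * (h * (K * R ^ 3)) :=
        mul_le_mul_of_nonneg_left (norm_picardMap_sub_le hK hK0 u_f hh hψR) hL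
    _ = 3 * K ^ 2 * R ^ 5 * h ^ 2 := by ring

end Trilinear

/-- Existence, uniqueness and first-order expansion of the strong electric field potential.
In the abstract setting of the contraction lemma (`Hs = H^s(M)`,
`B(φ₁,φ₂,φ₃) = Δ_D⁻¹ div(χ⟨∇φ₁,∇φ₂⟩∇φ₃)`), fixed points of `T_h(u) = u_f - h B(u,u,u)`
are exactly the solutions `ψ` of `div(∇ψ + hχ|∇ψ|²∇ψ) = 0`, `ψ|_∂M = f`.  For each
`0 < h ≤ h₀` there is a unique fixed point in `X = {u : ‖u - u_f‖ ≤ δ}`, and it satisfies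
`ψ = u_f - h B(u_f,u_f,u_f) + O_{H^s}(h²)`. -/
theorem stmt5 {Hs : Type*} [NormedAddCommGroup Hs] [NormedSpace ℝ Hs] [CompleteSpace Hs]
    (B : Hs →ₗ[ℝ] Hs →ₗ[ℝ] Hs →ₗ[ℝ] Hs) (C₁ : ℝ)
    (hB : ∀ φ₁ φ₂ φ₃ : Hs, ‖B φ₁ φ₂ φ₃‖ ≤ C₁ * ‖φ₁‖ * ‖φ₂‖ * ‖φ₃‖)
    (u_f : Hs) (δ : ℝ) (hδ : 0 < δ)
    (X : Set Hs) (hX : X = {u : Hs | ‖u - u_f‖ ≤ δ}) :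
    ∃ h₀ > 0, ∃ C : ℝ, ∀ h : ℝ, 0 < h → h ≤ h₀ →
      (∃! ψ : Hs, ψ ∈ X ∧ ψ = u_f - h • B ψ ψ ψ) ∧
      (∀ ψ : Hs, ψ ∈ X → ψ = u_f - h • B ψ ψ ψ →
        ‖ψ - (u_f - h • B u_f u_f u_f)‖ ≤ C * h ^ 2) := by
  set K := max C₁ 0
  have hK0 : 0 ≤ K := le_max_right _ _
  have hK : ∀ a b c : Hs, ‖B a b c‖ ≤ K * ‖a‖ * ‖b‖ * ‖c‖ := fun a b c =>
    (hB a b c).trans (by gcongr; exact le_max_left _ _)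
  set R := ‖u_f‖ + δ
  have hX : X = closedBall u_f δ := by ext; simp [hX, dist_eq_norm]
  have hXR : ∀ u ∈ X, ‖u‖ ≤ R := fun u hu => norm_le_of_mem_closedBall (hX ▸ hu)
  refine ⟨min (δ / (K * R ^ 3 + 1)) (1 / (2 * (3 * K * R ^ 2) + 1)), by positivity,
    3 * K ^ 2 * R ^ 5, fun h hh hh₀ => ?_⟩
  have hδh : h * (K * R ^ 3) ≤ δ := by
    have := (le_div_iff₀ (by positivity)).mp (hh₀.trans (min_le_left _ _))
    nlinarith
  have hLh : h * (3 * K * R ^ 2) ≤ 1 / 2 := by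
    have := (le_div_iff₀ (by positivity)).mp (hh₀.trans (min_le_right _ _))
    nlinarith
  have hmaps : MapsTo (picardMap B u_f h) X X := fun u hu => by
    rw [hX, mem_closedBall, dist_eq_norm]
    exact (norm_picardMap_sub_le hK hK0 u_f hh.le (hXR u hu)).trans hδh
  have hlip : LipschitzOnWith (1 / 2) (picardMap B u_f h) X :=
    LipschitzOnWith.of_dist_le_mul fun u hu v hv =>
      (dist_picardMap_le hK hK0 u_f hh.le (hXR u hu) (hXR v hv)).trans
        (by push_cast; gcongr)
  constructor
  · simpa only [IsFixedPt, picardMap, eq_comm (b := _ - _)] using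
      existsUnique_isFixedPt_of_lipschitzOnWith (hX ▸ isClosed_closedBall.isComplete)
        ⟨u_f, hX ▸ mem_closedBall_self hδ.le⟩ hmaps hlip (by norm_num)
  · intro ψ hψ hψfix
    exact norm_fixedPt_sub_picardMap_le hK hK0 hh.le hψfix.symm (hXR ψ hψ)
      (by simp only [R]; linarith)
end

section
/- If ψ : ℝ → ℝ satisfies ψ(s) = 1 for s > -1/8 and ψ(s) = 0 for s < -1/4 and 0 ≤ ψ ≤ 1, then for all a ∈ ℝ and E ∈ ℝ³, the numbers 1 + ψ(a|E|²) a|E|² and 1 + 3 ψ(a|E|²) a|E|² are both positive; hence the matrix A₀(a,E) = Id₃ + ψ(a|E|²)(a|E|² Id₃ + 2a E ⊗ E) (extended block-diagonally by Id₃) is symmetric positive definite. -/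
/-!
Write `t = ψ q`. The upper block is `(1 + t q) • 1 + (2 t a) • E ⊗ E`, whose quadratic form is
`(1 + t q)|x|² + 2 t a (E ⬝ x)²`. It is bounded below by `(1 + t q)|x|²` when `a ≥ 0` and, by
Cauchy–Schwarz, by `(1 + 3 t q)|x|²` when `a < 0`. The number `1 + 3 t q` is positive: trivially for
`q ≥ 0`, because `t = 0` for `q < -1/4`, and because `t ≤ 1` gives `1 + 3 t q ≥ 1 + 3 q > 0` in
between. Then `1 + t q = (1 + 3 t q)/3 + 2/3` is positive too.
-/

open Matrix

theorem Matrix.PosDef.fromBlocks_zero {m n R : Type*} [Fintype m] [Fintype n]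
    [Ring R] [PartialOrder R] [StarRing R] [IsOrderedAddMonoid R]
    {A : Matrix m m R} {D : Matrix n n R} (hA : A.PosDef) (hD : D.PosDef) :
    (fromBlocks A 0 0 D).PosDef := by
  refine .of_dotProduct_mulVec_pos (hA.isHermitian.fromBlocks (by simp) hD.isHermitian) ?_
  intro x hx
  obtain ⟨u, v, rfl⟩ : ∃ u v, x = Sum.elim u v := ⟨_, _, (Sum.elim_comp_inl_inr x).symm⟩
  rw [fromBlocks_mulVec, Function.star_sumElim]
  simp only [Sum.elim_comp_inl, Sum.elim_comp_inr, Matrix.zero_mulVec, add_zero, zero_add,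
    sumElim_dotProduct_sumElim]
  rcases eq_or_ne u 0 with rfl | hu
  · have hv : v ≠ 0 := by rintro rfl; exact hx Sum.elim_zero_zero
    simpa using hD.dotProduct_mulVec_pos hv
  · exact add_pos_of_pos_of_nonneg (hA.dotProduct_mulVec_pos hu)
      (hD.posSemidef.dotProduct_mulVec_nonneg _)

theorem dotProduct_smul_one_add_smul_vecMulVec_mulVec {n : Type*} [Fintype n] [DecidableEq n]
    (c d : ℝ) (E x : n → ℝ) :
    x ⬝ᵥ ((c • 1 + d • vecMulVec E E) *ᵥ x) = c * (x ⬝ᵥ x) + d * (E ⬝ᵥ x) ^ 2 := by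
  simp only [add_mulVec, smul_mulVec, one_mulVec, vecMulVec_mulVec, dotProduct_add,
    dotProduct_smul, op_smul_eq_smul, smul_eq_mul, dotProduct_comm x E]
  ring

theorem posDef_smul_one_add_smul_vecMulVec {n : Type*} [Fintype n] [DecidableEq n]
    {c d : ℝ} (E : n → ℝ) (hc : 0 < c) (hcd : 0 < c + d * (E ⬝ᵥ E)) :
    (c • 1 + d • vecMulVec E E).PosDef := by
  have hsymm : (c • 1 + d • vecMulVec E E).IsHermitian := by
    have := (posSemidef_vecMulVec_self_star E).isHermitian
    rw [star_trivial] at this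
    exact (isHermitian_one.smul (IsSelfAdjoint.all c)).add (this.smul (IsSelfAdjoint.all d))
  refine .of_dotProduct_mulVec_pos hsymm fun x hx => ?_
  rw [star_trivial, dotProduct_smul_one_add_smul_vecMulVec_mulVec]
  have hxx : 0 < x ⬝ᵥ x := dotProduct_self_star_pos_iff.mpr hx
  rcases le_or_gt 0 d with hd | hd
  · positivity
  · have hcs : (E ⬝ᵥ x) ^ 2 ≤ (E ⬝ᵥ E) * (x ⬝ᵥ x) := by
      simpa only [dotProduct, sq] using Finset.sum_mul_sq_le_sq_mul_sq Finset.univ E x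
    nlinarith [mul_le_mul_of_nonpos_left hcs hd.le, mul_pos hcd hxx]

theorem one_add_three_mul_mul_pos {t q : ℝ} (ht0 : 0 ≤ t) (ht1 : t ≤ 1)
    (ht_vanish : q < -1/4 → t = 0) : 0 < 1 + 3 * t * q := by
  rcases le_or_gt 0 q with hq0 | hq0
  · positivity
  rcases lt_or_ge q (-1/4) with hq4 | hq4
  · simp [ht_vanish hq4]
  · nlinarith [mul_nonneg (sub_nonneg.mpr ht1) (neg_nonneg.mpr hq0.le)]

theorem stmt10_general (ψ : ℝ → ℝ)
    (hψ0 : ∀ s : ℝ, s < -1/4 → ψ s = 0)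
    (hψb : ∀ s : ℝ, 0 ≤ ψ s ∧ ψ s ≤ 1)
    (a : ℝ) (E : Fin 3 → ℝ)
    (q : ℝ) (hq : q = a * (E ⬝ᵥ E))
    (M : Matrix (Fin 3) (Fin 3) ℝ)
    (hM : M = 1 + ψ q • (q • (1 : Matrix (Fin 3) (Fin 3) ℝ) + (2 * a) • vecMulVec E E))
    (A₀ : Matrix (Fin 3 ⊕ Fin 3) (Fin 3 ⊕ Fin 3) ℝ)
    (hA₀ : A₀ = Matrix.fromBlocks M 0 0 1) :
    0 < 1 + ψ q * q ∧ 0 < 1 + 3 * ψ q * q ∧ A₀.PosDef := by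
  have h3 : 0 < 1 + 3 * ψ q * q :=
    one_add_three_mul_mul_pos (hψb q).1 (hψb q).2 (hψ0 q)
  have h1 : 0 < 1 + ψ q * q := by linarith
  have hM' : M = (1 + ψ q * q) • 1 + (2 * ψ q * a) • vecMulVec E E := by
    rw [hM]; module
  have hcd : 1 + ψ q * q + 2 * ψ q * a * (E ⬝ᵥ E) = 1 + 3 * ψ q * q := by
    rw [hq]; ring
  have hMpd : M.PosDef := hM' ▸ posDef_smul_one_add_smul_vecMulVec E h1 (hcd ▸ h3)
  exact ⟨h1, h3, hA₀ ▸ hMpd.fromBlocks_zero PosDef.one⟩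

/-- If `ψ = 1` on `(-1/8,∞)`, `ψ = 0` on `(-∞,-1/4)`, and `0 ≤ ψ ≤ 1`, then
`1 + ψ(a|E|²)a|E|² > 0` and `1 + 3ψ(a|E|²)a|E|² > 0`, and the 6×6 matrix
`A₀ = diag(Id₃ + ψ(a|E|²)(a|E|² Id₃ + 2a E⊗E), Id₃)` is symmetric positive definite. -/
theorem stmt10 (ψ : ℝ → ℝ)
    (hψ1 : ∀ s : ℝ, -1/8 < s → ψ s = 1) (hψ0 : ∀ s : ℝ, s < -1/4 → ψ s = 0)
    (hψb : ∀ s : ℝ, 0 ≤ ψ s ∧ ψ s ≤ 1)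
    (a : ℝ) (E : Fin 3 → ℝ)
    (q : ℝ) (hq : q = a * (E ⬝ᵥ E))
    (M : Matrix (Fin 3) (Fin 3) ℝ)
    (hM : M = 1 + ψ q • (q • (1 : Matrix (Fin 3) (Fin 3) ℝ) + (2 * a) • vecMulVec E E))
    (A₀ : Matrix (Fin 3 ⊕ Fin 3) (Fin 3 ⊕ Fin 3) ℝ)
    (hA₀ : A₀ = Matrix.fromBlocks M 0 0 1) :
    0 < 1 + ψ q * q ∧ 0 < 1 + 3 * ψ q * q ∧ A₀.PosDef :=
  stmt10_general ψ hψ0 hψb a E q hq M hM A₀ hA₀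
end
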